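/- Let L be a first-order language with no relation symbols, let A be an L-structure, and let (p, q) be a congruence equation that fails in A (i.e., some assignment of congruences of A to its variables makes the two sides evaluate to different binary relations). Then: (i) the congruence equation (p, q) fails in the second matrix power A^[2]; and (ii) A^[2] satisfies, for all u, v ∈ A×A: ( u → v = □(u → v) and u ← v = □(u ← v) ) if and only if u = v, where →, ←, □ are the operations of A^[2] given by (a,b) → (c,d) = (a,c), (a,b) ← (c,d) = (b,d), □(a,b) = (b,a). Consequently, the nontrivial congruence equation (p, q) fails in an algebra satisfying the algebraizing biconditional with finite transformers. -/
import Mathlib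


open FirstOrder FirstOrder.Language

/-- `α ⊗ β`: the binary relation on `A × A` relating `(a,b)` to `(c,d)` iff
`(a,c) ∈ α` and `(b,d) ∈ β`. -/
def otimes {A : Type*} (α β : Set (A × A)) : Set ((A × A) × (A × A)) :=
  {p | (p.1.1, p.2.1) ∈ α ∧ (p.1.2, p.2.2) ∈ β}

/-- The `k`-ary operation `m_t` of the second matrix power `A^[2]`,
determined by a pair `t = (t₁, t₂)` of `L`-terms in `2k` variables
(the variables being indexed by `Fin k × Fin 2`, so that the variable `(j, i)`
receives the `i`-th coordinate of the `j`-th argument). -/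
def mOp2 {L : FirstOrder.Language} {A : Type*} [L.Structure A] {k : ℕ}
    (t₁ t₂ : L.Term (Fin k × Fin 2)) (x : Fin k → A × A) : A × A :=
  (t₁.realize (fun p => ![(x p.1).1, (x p.1).2] p.2),
   t₂.realize (fun p => ![(x p.1).1, (x p.1).2] p.2))

/-- A congruence of an `L`-structure `A`: an equivalence relation compatible
with every basic operation. -/
def IsCongruence (L : FirstOrder.Language) (A : Type*) [L.Structure A]
    (r : Set (A × A)) : Prop :=
  Equivalence (fun a b : A => (a, b) ∈ r) ∧
    ∀ (m : ℕ) (f : L.Functions m) (x y : Fin m → A),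
      (∀ i, (x i, y i) ∈ r) →
        (Structure.funMap f x, Structure.funMap f y) ∈ r

/-- A congruence of the second matrix power `A^[2]`: an equivalence relation on
`A × A` compatible with every operation `m_t` (for every positive `k` and every
pair of terms in `2k` variables). -/
def IsCongruence2 (L : FirstOrder.Language) (A : Type*) [L.Structure A]
    (r : Set ((A × A) × (A × A))) : Prop :=
  Equivalence (fun u v : A × A => (u, v) ∈ r) ∧
    ∀ (k : ℕ), 0 < k → ∀ (t₁ t₂ : L.Term (Fin k × Fin 2)) (x y : Fin k → A × A),
      (∀ j, (x j, y j) ∈ r) → (mOp2 t₁ t₂ x, mOp2 t₁ t₂ y) ∈ r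


/-- The smallest congruence of `A` containing a binary relation `ρ`
(the congruence generated by `ρ`, `Θ_A(ρ)`). -/
def congClosure (L : FirstOrder.Language) (A : Type*) [L.Structure A]
    (ρ : Set (A × A)) : Set (A × A) :=
  {p | ∀ r : Set (A × A), IsCongruence L A r → ρ ⊆ r → p ∈ r}

/-- The smallest congruence of the second matrix power `A^[2]` containing a
binary relation `ρ` on `A × A` (`Θ_{A^[2]}(ρ)`). -/
def congClosure2 (L : FirstOrder.Language) (A : Type*) [L.Structure A]
    (ρ : Set ((A × A) × (A × A))) : Set ((A × A) × (A × A)) :=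
  {p | ∀ r : Set ((A × A) × (A × A)), IsCongruence2 L A r → ρ ⊆ r → p ∈ r}

/-- Relational composition of binary relations on a set. -/
def relComp {X : Type*} (α γ : Set (X × X)) : Set (X × X) :=
  {p | ∃ b, (p.1, b) ∈ α ∧ (b, p.2) ∈ γ}

/-- Formal terms of a congruence equation: built from variables using the
binary symbols `∧`, `∨`, `∘`. -/
inductive CTerm (V : Type*) : Type _
  | var : V → CTerm V
  | meet : CTerm V → CTerm V → CTerm V
  | join : CTerm V → CTerm V → CTerm V
  | comp : CTerm V → CTerm V → CTerm V

/-- Evaluation of a congruence-equation term: variables are assigned binary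
relations via `v`, `∧` is intersection, `∘` is relational composition, and the
join `μ ∨ ν` is `cl (μ ∪ ν)`, where `cl` is the relevant congruence-generation
operator. -/
def ceval {X V : Type*} (cl : Set (X × X) → Set (X × X)) (v : V → Set (X × X)) :
    CTerm V → Set (X × X)
  | CTerm.var x => v x
  | CTerm.meet p q => ceval cl v p ∩ ceval cl v q
  | CTerm.join p q => cl (ceval cl v p ∪ ceval cl v q)
  | CTerm.comp p q => relComp (ceval cl v p) (ceval cl v q)

section Aux

variable {L : FirstOrder.Language} {A : Type*} [L.Structure A]

lemma term_congr {r : Set (A × A)} (h : IsCongruence L A r) {ι : Type*}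
    (t : L.Term ι) (v w : ι → A) (hvw : ∀ i, (v i, w i) ∈ r) :
    (t.realize v, t.realize w) ∈ r := by
  induction t with
  | var i => exact hvw i
  | func f ts ih =>
    simp only [Term.realize]
    exact h.2 _ f _ _ fun i => ih i

lemma congClosure_isCong (ρ : Set (A × A)) :
    IsCongruence L A (congClosure L A ρ) := by
  refine ⟨⟨fun a r hr _ => hr.1.refl a,
    fun h r hr hs => hr.1.symm (h r hr hs),
    fun h h' r hr hs => hr.1.trans (h r hr hs) (h' r hr hs)⟩,
    fun m f x y hxy r hr hs => hr.2 m f x y fun i => hxy i r hr hs⟩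

lemma subset_congClosure (ρ : Set (A × A)) : ρ ⊆ congClosure L A ρ :=
  fun _ hp _ _ hs => hs hp

lemma congClosure_min {ρ r : Set (A × A)} (hr : IsCongruence L A r)
    (hs : ρ ⊆ r) : congClosure L A ρ ⊆ r := fun _ hp => hp r hr hs

lemma congClosure2_isCong2 (ρ : Set ((A × A) × (A × A))) :
    IsCongruence2 L A (congClosure2 L A ρ) := by
  refine ⟨⟨fun a r hr _ => hr.1.refl a,
    fun h r hr hs => hr.1.symm (h r hr hs),
    fun h h' r hr hs => hr.1.trans (h r hr hs) (h' r hr hs)⟩,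
    fun k hk t₁ t₂ x y hxy r hr hs => hr.2 k hk t₁ t₂ x y fun j => hxy j r hr hs⟩

lemma subset_congClosure2 (ρ : Set ((A × A) × (A × A))) : ρ ⊆ congClosure2 L A ρ :=
  fun _ hp _ _ hs => hs hp

lemma congClosure2_min {ρ r : Set ((A × A) × (A × A))} (hr : IsCongruence2 L A r)
    (hs : ρ ⊆ r) : congClosure2 L A ρ ⊆ r := fun _ hp => hp r hr hs

lemma otimes_isCong2 {γ : Set (A × A)} (hγ : IsCongruence L A γ) :
    IsCongruence2 L A (otimes γ γ) := by
  constructor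
  · exact ⟨fun u => ⟨hγ.1.refl _, hγ.1.refl _⟩,
      fun h => ⟨hγ.1.symm h.1, hγ.1.symm h.2⟩,
      fun h h' => ⟨hγ.1.trans h.1 h'.1, hγ.1.trans h.2 h'.2⟩⟩
  · intro k hk t₁ t₂ x y hxy
    have key : ∀ p : Fin k × Fin 2,
        ((fun p : Fin k × Fin 2 => ![(x p.1).1, (x p.1).2] p.2) p,
         (fun p : Fin k × Fin 2 => ![(y p.1).1, (y p.1).2] p.2) p) ∈ γ := by
      rintro ⟨j, i⟩
      fin_cases i
      · simpa using (hxy j).1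
      · simpa using (hxy j).2
    exact ⟨term_congr hγ t₁ _ _ key, term_congr hγ t₂ _ _ key⟩

-- abstract facts about any congruence of A^[2]
lemma cong2_sq {R : Set ((A × A) × (A × A))} (hR : IsCongruence2 L A R)
    {u v : A × A} (h : (u, v) ∈ R) :
    ((u.1, u.1), (v.1, v.1)) ∈ R := by
  have := hR.2 1 one_pos (Term.var (0, (0 : Fin 2))) (Term.var (0, (0 : Fin 2)))
    ![u] ![v] (by intro j; fin_cases j; simpa using h)
  simpa [mOp2, Term.realize] using this

lemma cong2_pair {R : Set ((A × A) × (A × A))} (hR : IsCongruence2 L A R)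
    {a b c d : A} (h1 : ((a, a), (b, b)) ∈ R) (h2 : ((c, c), (d, d)) ∈ R) :
    ((a, c), (b, d)) ∈ R := by
  have := hR.2 2 two_pos (Term.var (0, (0 : Fin 2))) (Term.var (1, (0 : Fin 2)))
    ![(a, a), (c, c)] ![(b, b), (d, d)]
    (by intro j; fin_cases j <;> simpa using (by first | exact h1 | exact h2))
  simpa [mOp2, Term.realize] using this

lemma cong2_diag_isCong {R : Set ((A × A) × (A × A))} (hR : IsCongruence2 L A R) :
    IsCongruence L A {p : A × A | ((p.1, p.1), (p.2, p.2)) ∈ R} := by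
  constructor
  · exact ⟨fun a => hR.1.refl _, fun h => hR.1.symm h, fun h h' => hR.1.trans h h'⟩
  · intro m f x y hxy
    rcases Nat.eq_zero_or_pos m with hm | hm
    · subst hm
      have : x = y := funext fun i => i.elim0
      subst this
      exact hR.1.refl _
    · have := hR.2 m hm (Term.func f fun i => Term.var (i, (0 : Fin 2)))
        (Term.func f fun i => Term.var (i, (0 : Fin 2)))
        (fun j => (x j, x j)) (fun j => (y j, y j)) (fun j => hxy j)
      simpa [mOp2, Term.realize] using this

lemma key_join (α β : Set (A × A)) :
    congClosure2 L A (otimes α α ∪ otimes β β) =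
      otimes (congClosure L A (α ∪ β)) (congClosure L A (α ∪ β)) := by
  set γ := congClosure L A (α ∪ β) with hγdef
  have hγ : IsCongruence L A γ := congClosure_isCong _
  apply Set.Subset.antisymm
  · apply congClosure2_min (otimes_isCong2 hγ)
    rintro ⟨u, v⟩ (h | h)
    · exact ⟨subset_congClosure _ (Or.inl h.1), subset_congClosure _ (Or.inl h.2)⟩
    · exact ⟨subset_congClosure _ (Or.inr h.1), subset_congClosure _ (Or.inr h.2)⟩
  · set R := congClosure2 L A (otimes α α ∪ otimes β β) with hRdef
    have hR : IsCongruence2 L A R := congClosure2_isCong2 _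
    have hsub : otimes α α ∪ otimes β β ⊆ R := subset_congClosure2 _
    set δ : Set (A × A) := {p : A × A | ((p.1, p.1), (p.2, p.2)) ∈ R} with hδdef
    have hδ : IsCongruence L A δ := cong2_diag_isCong hR
    have hγδ : γ ⊆ δ := by
      apply congClosure_min hδ
      rintro ⟨a, b⟩ (h | h)
      · exact hsub (Or.inl ⟨h, h⟩)
      · exact hsub (Or.inr ⟨h, h⟩)
    rintro ⟨u, v⟩ ⟨h1, h2⟩
    exact cong2_pair hR (hγδ h1) (hγδ h2)

lemma ceval_otimes {V : Type*} (v : V → Set (A × A)) (t : CTerm V) :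
    ceval (congClosure2 L A) (fun x => otimes (v x) (v x)) t =
      otimes (ceval (congClosure L A) v t) (ceval (congClosure L A) v t) := by
  induction t with
  | var x => rfl
  | meet p q ihp ihq =>
    rw [ceval, ceval, ihp, ihq]
    ext e
    simp only [otimes, Set.mem_inter_iff, Set.mem_setOf_eq]
    tauto
  | join p q ihp ihq =>
    rw [ceval, ceval, ihp, ihq]
    rw [show otimes (ceval (congClosure L A) v p) (ceval (congClosure L A) v p) ∪
        otimes (ceval (congClosure L A) v q) (ceval (congClosure L A) v q) =
        otimes (ceval (congClosure L A) v p) (ceval (congClosure L A) v p) ∪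
        otimes (ceval (congClosure L A) v q) (ceval (congClosure L A) v q) from rfl]
    exact key_join _ _
  | comp p q ihp ihq =>
    rw [ceval, ceval, ihp, ihq]
    ext e
    simp only [otimes, relComp, Set.mem_setOf_eq]
    constructor
    · rintro ⟨b, ⟨h1, h2⟩, ⟨h3, h4⟩⟩
      exact ⟨⟨b.1, h1, h3⟩, ⟨b.2, h2, h4⟩⟩
    · rintro ⟨⟨b1, h1, h3⟩, ⟨b2, h2, h4⟩⟩
      exact ⟨(b1, b2), ⟨h1, h2⟩, ⟨h3, h4⟩⟩

lemma otimes_inj {P Q : Set (A × A)} (h : otimes P P = otimes Q Q) : P = Q := by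
  ext ⟨a, b⟩
  have := Set.ext_iff.mp h ((a, a), (b, b))
  simp only [otimes, Set.mem_setOf_eq] at this
  constructor
  · intro hp; exact (this.mp ⟨hp, hp⟩).1
  · intro hq; exact (this.mpr ⟨hq, hq⟩).1

end Aux
/-- if a congruence equation `(p, q)` fails in `A`, then (i) it
fails in the second matrix power `A^[2]`, and (ii) `A^[2]` validates the
algebraizing biconditional `(u→v = □(u→v) ∧ u←v = □(u←v)) ↔ u = v` for its
operations `→`, `←`, `□` given by `(a,b)→(c,d) = (a,c)`, `(a,b)←(c,d) = (b,d)`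
and `□(a,b) = (b,a)`.  Hence the nontrivial congruence equation `(p, q)` fails
in an algebra satisfying the algebraizing biconditional with finite
transformers. -/
theorem congruence_equation_fails_in_variety_of_logic
    (L : FirstOrder.Language) (A : Type*) [L.Structure A]
    (hrel : ∀ m : ℕ, IsEmpty (L.Relations m))
    (V : Type*) (p q : CTerm V)
    (hfail : ∃ v : V → Set (A × A), (∀ x, IsCongruence L A (v x)) ∧
      ceval (congClosure L A) v p ≠ ceval (congClosure L A) v q) :
    (∃ w : V → Set ((A × A) × (A × A)), (∀ x, IsCongruence2 L A (w x)) ∧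
        ceval (congClosure2 L A) w p ≠ ceval (congClosure2 L A) w q) ∧
      ∃ (i₁ i₂ j₁ j₂ : Fin 2 × Fin 2) (m₁ m₂ : Fin 1 × Fin 2),
        (∀ u v : A × A,
            mOp2 (L := L) (Term.var i₁) (Term.var i₂) ![u, v] = (u.1, v.1)) ∧
        (∀ u v : A × A,
            mOp2 (L := L) (Term.var j₁) (Term.var j₂) ![u, v] = (u.2, v.2)) ∧
        (∀ u : A × A,
            mOp2 (L := L) (Term.var m₁) (Term.var m₂) ![u] = (u.2, u.1)) ∧
        (∀ u v : A × A,
          (mOp2 (L := L) (Term.var i₁) (Term.var i₂) ![u, v] =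
              mOp2 (L := L) (Term.var m₁) (Term.var m₂)
                ![mOp2 (L := L) (Term.var i₁) (Term.var i₂) ![u, v] ] ∧
            mOp2 (L := L) (Term.var j₁) (Term.var j₂) ![u, v] =
              mOp2 (L := L) (Term.var m₁) (Term.var m₂)
                ![mOp2 (L := L) (Term.var j₁) (Term.var j₂) ![u, v] ]) ↔
          u = v) := by
  obtain ⟨v, hv, hne⟩ := hfail
  constructor
  · refine ⟨fun x => otimes (v x) (v x), fun x => otimes_isCong2 (hv x), ?_⟩
    rw [ceval_otimes, ceval_otimes]
    intro heq
    exact hne (otimes_inj heq)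
  · refine ⟨(0, 0), (1, 0), (0, 1), (1, 1), (0, 1), (0, 0), ?_, ?_, ?_, ?_⟩
    · intro u v; simp [mOp2, Term.realize]
    · intro u v; simp [mOp2, Term.realize]
    · intro u; simp [mOp2, Term.realize]
    · intro u v
      simp only [mOp2, Term.realize]
      simp [Prod.ext_iff]
      tauto
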